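/- Let B : ℤ → M(2,ℂ) be bounded (‖B(j)‖ < M) admitting dominated splitting: there exist B-invariant line fields E^u(j), E^s(j) ⊂ ℂ², a gap constant λ > 1 and N ∈ ℤ₊ with ‖B_N(j) u(j)‖ > λ‖B_N(j) s(j)‖ for all unit vectors u(j) ∈ E^u(j), s(j) ∈ E^s(j), the angles inf_j d(E^u(j), E^s(j)) > 0, and inf_j |λ_j⁺| = η > 0 where B(j)u(j) = λ_j⁺ u(j+1) up to phase. Then there exist c > 0 and μ > 1 such that for all n ≥ 1 and all j: ‖B_n(j) u(j)‖ > c μⁿ ‖B_n(j) s(j)‖, and consequently σ₁(B_n(j)) > c μⁿ σ₂(B_n(j)). -/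

import Mathlib

noncomputable section
open Matrix
def vnorm (v : Fin 2 → ℂ) : ℝ := Real.sqrt (‖v 0‖ ^ 2 + ‖v 1‖ ^ 2)
def opNorm (A : Matrix (Fin 2) (Fin 2) ℂ) : ℝ :=
  ‖(Matrix.toEuclideanCLM (𝕜 := ℂ) (n := Fin 2) A)‖
def sigma1 (A : Matrix (Fin 2) (Fin 2) ℂ) : ℝ := opNorm A
def sigma2 (A : Matrix (Fin 2) (Fin 2) ℂ) : ℝ := ‖A.det‖ / opNorm A
def dLine (u v : Fin 2 → ℂ) : ℝ := 2 * ‖u 0 * v 1 - u 1 * v 0‖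
def prodSeq (B : ℤ → Matrix (Fin 2) (Fin 2) ℂ) : ℕ → ℤ → Matrix (Fin 2) (Fin 2) ℂ
  | 0, _ => 1
  | n+1, j => B (j + n) * prodSeq B n j
def IsMostContracted (A : Matrix (Fin 2) (Fin 2) ℂ) (w : Fin 2 → ℂ) : Prop :=
  vnorm w = 1 ∧ vnorm (A.mulVec w) = sigma2 A
def IsMostExpandedImage (A : Matrix (Fin 2) (Fin 2) ℂ) (w : Fin 2 → ℂ) : Prop :=
  vnorm w = 1 ∧ ∃ z : Fin 2 → ℂ, vnorm z = 1 ∧ vnorm (A.mulVec z) = sigma1 A ∧ ∃ c : ℂ, A.mulVec z = c • w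

/-!
Along the invariant lines the cocycle acts by scalars, so `B_n(j) u(j)` and `B_n(j) s(j)` have
lengths `∏ |λ⁺|` and `∏ |λ⁻|`. Their ratio is a multiplicative cocycle of bounded steps
(`|λ⁻| ≤ M`, `|λ⁺| ≥ η`) which contracts by `λ⁻¹` over every block of length `N`, hence decays
like `μ⁻ⁿ` with `μ = λ^(1/N)`. For the singular values, `σ₁ ≥ |B_n u|` and, since
`det B_n · (u ∧ s) = B_n u ∧ B_n s`, the angle bound gives `σ₂ ≤ (2/δ) |B_n s|`.
-/

open Finset

def orbitProd {R : Type*} [CommMonoid R] (f : ℤ → R) (n : ℕ) (j : ℤ) : R :=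
  ∏ i ∈ range n, f (j + i)

section OrbitProd

variable {R : Type*} [CommMonoid R]

lemma orbitProd_add (f : ℤ → R) (a b : ℕ) (j : ℤ) :
    orbitProd f (a + b) j = orbitProd f a j * orbitProd f b (j + a) := by
  simp only [orbitProd, prod_range_add, Nat.cast_add, add_assoc]

lemma orbitProd_succ (f : ℤ → R) (n : ℕ) (j : ℤ) :
    orbitProd f (n + 1) j = orbitProd f n j * f (j + n) :=
  prod_range_succ _ _

end OrbitProd

section BlockContraction

variable {r : ℤ → ℝ}

lemma orbitProd_nonneg (hr : ∀ i, 0 ≤ r i) (n : ℕ) (j : ℤ) : 0 ≤ orbitProd r n j :=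
  prod_nonneg fun _ _ => hr _

lemma orbitProd_le_pow (hr : ∀ i, 0 ≤ r i) {C : ℝ} (hrC : ∀ i, r i ≤ C) (n : ℕ) (j : ℤ) :
    orbitProd r n j ≤ C ^ n := by
  calc orbitProd r n j ≤ ∏ _i ∈ range n, C := prod_le_prod (fun _ _ => hr _) fun _ _ => hrC _
    _ = C ^ n := by rw [prod_const, card_range]

lemma pow_mul_orbitProd_mul_le_one (hr : ∀ i, 0 ≤ r i) {lam : ℝ} (hlam : 0 ≤ lam) {N : ℕ}
    (hblock : ∀ j, lam * orbitProd r N j ≤ 1) (k : ℕ) (j : ℤ) :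
    lam ^ k * orbitProd r (N * k) j ≤ 1 := by
  induction k with
  | zero => simp [orbitProd]
  | succ k ih =>
    rw [Nat.mul_succ, orbitProd_add, pow_succ]
    calc lam ^ k * lam * (orbitProd r (N * k) j * orbitProd r N (j + ↑(N * k)))
        = (lam ^ k * orbitProd r (N * k) j) * (lam * orbitProd r N (j + ↑(N * k))) := by ring
      _ ≤ 1 * 1 := mul_le_mul ih (hblock _) (mul_nonneg hlam (orbitProd_nonneg hr _ _)) zero_le_one
      _ = 1 := one_mul 1

lemma exists_pow_mul_orbitProd_le (hr : ∀ i, 0 ≤ r i) {C lam : ℝ} {N : ℕ} (hN : 1 ≤ N)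
    (hrC : ∀ i, r i ≤ C) (hlam : 1 < lam) (hblock : ∀ j, lam * orbitProd r N j ≤ 1) :
    ∃ K > 0, ∃ μ > 1, ∀ n j, μ ^ n * orbitProd r n j ≤ K := by
  have hlam0 : 0 < lam := zero_lt_one.trans hlam
  set μ := lam ^ (N : ℝ)⁻¹
  have hμN : μ ^ N = lam := by
    rw [← Real.rpow_natCast, ← Real.rpow_mul hlam0.le,
      inv_mul_cancel₀ (by exact_mod_cast (by omega : N ≠ 0)), Real.rpow_one]
  have hμ : 1 < μ := Real.one_lt_rpow hlam (by positivity)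
  set C' := max 1 C
  refine ⟨lam * C' ^ N, by positivity, μ, hμ, fun n j => ?_⟩
  obtain ⟨k, t, ht, rfl⟩ : ∃ k t, t < N ∧ n = N * k + t :=
    ⟨n / N, n % N, Nat.mod_lt _ (by omega), (Nat.div_add_mod n N).symm⟩
  have hμt : μ ^ t ≤ lam := hμN ▸ pow_le_pow_right₀ hμ.le ht.le
  have hrt : orbitProd r t (j + ↑(N * k)) ≤ C' ^ N :=
    (orbitProd_le_pow hr (fun i => (hrC i).trans (le_max_right 1 C)) _ _).trans
      (pow_le_pow_right₀ (le_max_left 1 C) ht.le)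
  rw [orbitProd_add, pow_add, pow_mul, hμN]
  calc lam ^ k * μ ^ t * (orbitProd r (N * k) j * orbitProd r t (j + ↑(N * k)))
      = (lam ^ k * orbitProd r (N * k) j) * (μ ^ t * orbitProd r t (j + ↑(N * k))) := by ring
    _ ≤ 1 * (lam * C' ^ N) :=
        mul_le_mul (pow_mul_orbitProd_mul_le_one hr hlam0.le hblock k j)
          (mul_le_mul hμt hrt (orbitProd_nonneg hr _ _) hlam0.le)
          (mul_nonneg (by positivity) (orbitProd_nonneg hr _ _)) zero_le_one
    _ = lam * C' ^ N := one_mul _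

end BlockContraction

lemma vnorm_eq_norm_toLp (v : Fin 2 → ℂ) : vnorm v = ‖WithLp.toLp 2 v‖ := by
  simp [EuclideanSpace.norm_eq, Fin.sum_univ_two, vnorm]

lemma vnorm_smul (c : ℂ) (v : Fin 2 → ℂ) : vnorm (c • v) = ‖c‖ * vnorm v := by
  simp only [vnorm_eq_norm_toLp, WithLp.toLp_smul, norm_smul]

lemma vnorm_mulVec_le (A : Matrix (Fin 2) (Fin 2) ℂ) (v : Fin 2 → ℂ) :
    vnorm (A *ᵥ v) ≤ opNorm A * vnorm v := by
  rw [vnorm_eq_norm_toLp, vnorm_eq_norm_toLp]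
  exact (toEuclideanCLM (𝕜 := ℂ) (n := Fin 2) A).le_opNorm (WithLp.toLp 2 v)

lemma det_mul_wedge (A : Matrix (Fin 2) (Fin 2) ℂ) (x y : Fin 2 → ℂ) :
    A.det * (x 0 * y 1 - x 1 * y 0) = (A *ᵥ x) 0 * (A *ᵥ y) 1 - (A *ᵥ x) 1 * (A *ᵥ y) 0 := by
  simp only [mulVec, dotProduct, Fin.sum_univ_two, det_fin_two]
  ring

lemma norm_wedge_le (x y : Fin 2 → ℂ) : ‖x 0 * y 1 - x 1 * y 0‖ ≤ vnorm x * vnorm y := by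
  calc ‖x 0 * y 1 - x 1 * y 0‖ ≤ ‖x 0‖ * ‖y 1‖ + ‖x 1‖ * ‖y 0‖ := by
        simpa only [norm_mul] using norm_sub_le (x 0 * y 1) (x 1 * y 0)
    _ ≤ vnorm x * vnorm y := by
        have h := Real.sum_mul_le_sqrt_mul_sqrt univ ![‖x 0‖, ‖x 1‖] ![‖y 1‖, ‖y 0‖]
        simp only [Fin.sum_univ_two, Matrix.cons_val_zero, Matrix.cons_val_one] at h
        rwa [vnorm, vnorm, add_comm (‖y 0‖ ^ 2)]

section SingularValues

variable (A : Matrix (Fin 2) (Fin 2) ℂ) {u : Fin 2 → ℂ}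

lemma vnorm_mulVec_le_sigma1 (hu : vnorm u = 1) : vnorm (A *ᵥ u) ≤ sigma1 A := by
  rw [sigma1, ← mul_one (opNorm A), ← hu]
  exact vnorm_mulVec_le A u

lemma sigma2_mul_dLine_le (hu : vnorm u = 1) (s : Fin 2 → ℂ) :
    sigma2 A * dLine u s ≤ 2 * vnorm (A *ᵥ s) := by
  have hnonneg : 0 ≤ opNorm A := norm_nonneg _
  rcases hnonneg.eq_or_lt with h0 | hpos
  · simp only [sigma2, ← h0, div_zero, zero_mul]
    exact mul_nonneg zero_le_two (Real.sqrt_nonneg _)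
  · have hwedge : ‖A.det‖ * ‖u 0 * s 1 - u 1 * s 0‖ ≤ opNorm A * vnorm (A *ᵥ s) := by
      calc ‖A.det‖ * ‖u 0 * s 1 - u 1 * s 0‖ ≤ vnorm (A *ᵥ u) * vnorm (A *ᵥ s) := by
            rw [← norm_mul, det_mul_wedge]; exact norm_wedge_le _ _
        _ ≤ opNorm A * vnorm (A *ᵥ s) :=
            mul_le_mul_of_nonneg_right (vnorm_mulVec_le_sigma1 A hu) (Real.sqrt_nonneg _)
    rw [sigma2, dLine, div_mul_eq_mul_div, div_le_iff₀ hpos]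
    linarith

end SingularValues

section InvariantLines

variable {B : ℤ → Matrix (Fin 2) (Fin 2) ℂ} {v : ℤ → Fin 2 → ℂ} {l : ℤ → ℂ}

lemma prodSeq_mulVec_of_invariant (hv : ∀ j, B j *ᵥ v j = l j • v (j + 1)) (n : ℕ) (j : ℤ) :
    prodSeq B n j *ᵥ v j = orbitProd l n j • v (j + n) := by
  induction n with
  | zero => simp [prodSeq, orbitProd]
  | succ n ih =>
    rw [prodSeq, ← mulVec_mulVec, ih, mulVec_smul, hv, smul_smul, orbitProd_succ, Nat.cast_succ,
      add_assoc]

lemma vnorm_prodSeq_mulVec_of_invariant (hv1 : ∀ j, vnorm (v j) = 1)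
    (hv : ∀ j, B j *ᵥ v j = l j • v (j + 1)) (n : ℕ) (j : ℤ) :
    vnorm (prodSeq B n j *ᵥ v j) = orbitProd (‖l ·‖) n j := by
  rw [prodSeq_mulVec_of_invariant hv, vnorm_smul, hv1, mul_one, orbitProd, norm_prod, orbitProd]

lemma norm_le_of_invariant {M : ℝ} (hM : ∀ j, opNorm (B j) < M) (hv1 : ∀ j, vnorm (v j) = 1)
    (hv : ∀ j, B j *ᵥ v j = l j • v (j + 1)) (j : ℤ) : ‖l j‖ ≤ M := by
  have h := vnorm_mulVec_le (B j) (v j)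
  rw [hv, vnorm_smul, hv1, hv1, mul_one, mul_one] at h
  exact h.trans (hM j).le

end InvariantLines

lemma exists_pow_mul_vnorm_stable_le {B : ℤ → Matrix (Fin 2) (Fin 2) ℂ} {M : ℝ}
    (hM : ∀ j, opNorm (B j) < M) {u s : ℤ → Fin 2 → ℂ} (hu : ∀ j, vnorm (u j) = 1)
    (hs : ∀ j, vnorm (s j) = 1) {lp lm : ℤ → ℂ} (hinvu : ∀ j, B j *ᵥ u j = lp j • u (j + 1))
    (hinvs : ∀ j, B j *ᵥ s j = lm j • s (j + 1)) {η : ℝ} (hη : 0 < η) (hlp : ∀ j, η ≤ ‖lp j‖)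
    {lam : ℝ} (hlam : 1 < lam) {N : ℕ} (hN : 1 ≤ N)
    (hgap : ∀ j, lam * vnorm (prodSeq B N j *ᵥ s j) ≤ vnorm (prodSeq B N j *ᵥ u j)) :
    ∃ K > 0, ∃ μ > 1, ∀ n j,
      μ ^ n * vnorm (prodSeq B n j *ᵥ s j) ≤ K * vnorm (prodSeq B n j *ᵥ u j) := by
  have hP : ∀ n j, 0 < orbitProd (‖lp ·‖) n j := fun n j =>
    prod_pos fun _ _ => hη.trans_le (hlp _)
  have hratio : ∀ n j, orbitProd (fun i => ‖lm i‖ / ‖lp i‖) n j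
      = orbitProd (‖lm ·‖) n j / orbitProd (‖lp ·‖) n j := fun n j => prod_div_distrib _ _
  simp only [vnorm_prodSeq_mulVec_of_invariant hu hinvu,
    vnorm_prodSeq_mulVec_of_invariant hs hinvs] at hgap ⊢
  have hstep : ∀ i, ‖lm i‖ / ‖lp i‖ ≤ M / η := fun i =>
    div_le_div₀ ((norm_nonneg _).trans (norm_le_of_invariant hM hs hinvs i))
      (norm_le_of_invariant hM hs hinvs i) hη (hlp i)
  obtain ⟨K, hK, μ, hμ, hdecay⟩ := exists_pow_mul_orbitProd_le (fun _ => by positivity) hN hstep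
    hlam fun j => by rw [hratio, ← mul_div_assoc, div_le_one (hP N j)]; exact hgap j
  refine ⟨K, hK, μ, hμ, fun n j => ?_⟩
  have h := hdecay n j
  rwa [hratio, ← mul_div_assoc, div_le_iff₀ (hP n j)] at h

lemma vnorm_prodSeq_mulVec_pos {B : ℤ → Matrix (Fin 2) (Fin 2) ℂ} {u : ℤ → Fin 2 → ℂ}
    (hu : ∀ j, vnorm (u j) = 1) {lp : ℤ → ℂ} (hinvu : ∀ j, B j *ᵥ u j = lp j • u (j + 1))
    {η : ℝ} (hη : 0 < η) (hlp : ∀ j, η ≤ ‖lp j‖) (n : ℕ) (j : ℤ) :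
    0 < vnorm (prodSeq B n j *ᵥ u j) := by
  rw [vnorm_prodSeq_mulVec_of_invariant hu hinvu]
  exact prod_pos fun _ _ => hη.trans_le (hlp _)

theorem stmt9 (B : ℤ → Matrix (Fin 2) (Fin 2) ℂ) (M : ℝ) (hM : ∀ j, opNorm (B j) < M)
    (u s : ℤ → (Fin 2 → ℂ)) (hu : ∀ j, vnorm (u j) = 1) (hs : ∀ j, vnorm (s j) = 1)
    (lp lm : ℤ → ℂ)
    (hinvu : ∀ j, (B j).mulVec (u j) = lp j • u (j+1))
    (hinvs : ∀ j, (B j).mulVec (s j) = lm j • s (j+1))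
    (η : ℝ) (hη : 0 < η) (hlp : ∀ j, η ≤ ‖lp j‖)
    (lam : ℝ) (hlam : 1 < lam) (N : ℕ) (hN : 1 ≤ N)
    (hgap : ∀ j, vnorm ((prodSeq B N j).mulVec (u j)) > lam * vnorm ((prodSeq B N j).mulVec (s j)))
    (δ : ℝ) (hδ : 0 < δ) (hangle : ∀ j, δ ≤ dLine (u j) (s j)) :
    ∃ c > 0, ∃ μ > 1, ∀ (n : ℕ), 1 ≤ n → ∀ j : ℤ,
      vnorm ((prodSeq B n j).mulVec (u j)) > c * μ ^ (n : ℝ) * vnorm ((prodSeq B n j).mulVec (s j)) ∧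
      sigma1 (prodSeq B n j) > c * μ ^ (n : ℝ) * sigma2 (prodSeq B n j) := by
  obtain ⟨K, hK, μ, hμ, hdecay⟩ :=
    exists_pow_mul_vnorm_stable_le hM hu hs hinvu hinvs hη hlp hlam hN fun j => (hgap j).le
  -- `c * K ≤ 1 / 2` gives the first claim and `2 * c * K ≤ δ / 2` the second.
  set c := min 1 (δ / 2) / (2 * K)
  have hc : 0 < c := by positivity
  have hcK : c * K = min 1 (δ / 2) / 2 := by
    simp only [c]
    field_simp
  refine ⟨c, hc, μ, hμ, fun n _ j => ?_⟩
  rw [Real.rpow_natCast]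
  set A := prodSeq B n j
  have hAu := vnorm_prodSeq_mulVec_pos hu hinvu hη hlp n j
  have hσ1 := vnorm_mulVec_le_sigma1 A (hu j)
  have hAs : c * μ ^ n * vnorm (A *ᵥ s j) ≤ c * K * vnorm (A *ᵥ u j) := by
    rw [mul_assoc, mul_assoc]
    exact mul_le_mul_of_nonneg_left (hdecay n j) hc.le
  have hσ2 : sigma2 A * δ ≤ 2 * vnorm (A *ᵥ s j) :=
    (mul_le_mul_of_nonneg_left (hangle j) (div_nonneg (norm_nonneg _) (norm_nonneg _))).trans
      (sigma2_mul_dLine_le A (hu j) (s j))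
  constructor
  · calc c * μ ^ n * vnorm (A *ᵥ s j) ≤ c * K * vnorm (A *ᵥ u j) := hAs
      _ < vnorm (A *ᵥ u j) := by rw [hcK]; nlinarith [min_le_left 1 (δ / 2)]
  · refine lt_of_mul_lt_mul_right ?_ hδ.le
    calc c * μ ^ n * sigma2 A * δ ≤ c * μ ^ n * (2 * vnorm (A *ᵥ s j)) := by
          rw [mul_assoc _ (sigma2 A)]
          exact mul_le_mul_of_nonneg_left hσ2 (by positivity)
      _ ≤ 2 * (c * K) * sigma1 A := by
          nlinarith [mul_le_mul_of_nonneg_left hσ1 (mul_pos hc hK).le]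
      _ < sigma1 A * δ := by nlinarith [min_le_right 1 (δ / 2)]
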